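/- arXiv:2211.12230 — 3 statements merged into one kernel-verified Lean document; each statement's English description precedes it below -/
import Mathlib

section
/- Let n ∈ ℕ, N = 2^n, G = F^{⊗n}, let H be an N×N matrix over 𝔽₂, and let 𝒜ᶜ ⊆ {0,…,N−1}. Suppose u ∈ 𝔽₂^N satisfies u·H = 0 and set x = u·G. Then for every i ∈ {0,…,N−1}: u_0^{i−1}·H_{0:i−1, ℒ_i} + x·Q^{(i)} = 0 over 𝔽₂, where u_0^{i−1} = (u_0,…,u_{i−1}) and Q^{(i)} = G_{*, i:N−1}·H_{i:N−1, ℒ_i}. -/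
/-!
Over `𝔽₂` the kernel `F` is an involution, hence so is every Kronecker power `G = F^{⊗n}`;
thus `x·G = u·G·G = u`. Pushing `x` through `Q^{(i)}` therefore gives `u_i^{N-1}·H_{i:N-1,ℒ_i}`,
which together with `u_0^{i-1}·H_{0:i-1,ℒ_i}` assembles the `ℒ_i`-columns of `u·H = 0`.
-/

open Matrix Finset

/-- The 2×2 polarization kernel `F = [[1,0],[1,1]]` over `𝔽₂`. -/
def polarF : Matrix (Fin 2) (Fin 2) (ZMod 2) := !![1, 0; 1, 1]

/-- The `n`-th Kronecker power `F^{⊗n}` of the polarization kernel, a `2^n × 2^n`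
matrix over `𝔽₂`. -/
def kronPow : (n : ℕ) → Matrix (Fin (2 ^ n)) (Fin (2 ^ n)) (ZMod 2)
  | 0 => 1
  | n + 1 =>
      Matrix.reindex (finProdFinEquiv.trans (finCongr (by ring)))
        (finProdFinEquiv.trans (finCongr (by ring)))
        (Matrix.kroneckerMap (· * ·) polarF (kronPow n))

lemma polarF_mul_self : polarF * polarF = 1 := by
  decide

lemma kronPow_mul_self (n : ℕ) : kronPow n * kronPow n = 1 := by
  induction n with
  | zero => simp [kronPow]
  | succ n ih =>
      simp only [kronPow, reindex_apply]
      rw [submatrix_mul_equiv, ← mul_kronecker_mul, polarF_mul_self, ih, one_kronecker_one,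
        submatrix_one_equiv]

lemma vecMul_vecMul_kronPow_self (n : ℕ) (u : Fin (2 ^ n) → ZMod 2) :
    vecMul (vecMul u (kronPow n)) (kronPow n) = u := by
  rw [vecMul_vecMul, kronPow_mul_self, vecMul_one]

lemma sum_mul_sum_mul_eq_of_vecMul_eq {ι κ R : Type*} [Fintype ι] [CommSemiring R]
    {x u : ι → R} {M : Matrix ι ι R} (h : vecMul x M = u) (H : Matrix ι κ R) (s : Finset ι)
    (j : κ) : ∑ m, x m * ∑ k ∈ s, M m k * H k j = ∑ k ∈ s, u k * H k j := by
  simp only [mul_sum, ← mul_assoc]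
  rw [sum_comm]
  refine sum_congr rfl fun k _ => ?_
  rw [← sum_mul, ← h]
  rfl

/-- **Theorem 2 (full FC conversion).**  Let `N = 2^n`, `G = F^{⊗n}`, let `H` be
an `N × N` matrix over `𝔽₂`, and let `Ac ⊆ {0,…,N−1}` be the constrained
positions.  If `u·H = 0` and `x = u·G`, then for every `i` and every future
constraint index `j ∈ ℒ_i = {k ∈ Ac : k ≥ i}` we have
`(u_0^{i−1}·H_{0:i−1,ℒ_i})_j + (x·Q^{(i)})_j = 0`, where
`Q^{(i)} = G_{*,i:N−1}·H_{i:N−1,ℒ_i}`; entrywise, the `j`-th coordinate reads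
`Σ_{k<i} u_k·H_{k,j} + Σ_m x_m · (Σ_{k≥i} G_{m,k}·H_{k,j}) = 0`. -/
theorem full_FC_conversion (n : ℕ) (H : Matrix (Fin (2 ^ n)) (Fin (2 ^ n)) (ZMod 2))
    (Ac : Finset (Fin (2 ^ n)))
    (u : Fin (2 ^ n) → ZMod 2) (hu : Matrix.vecMul u H = 0)
    (x : Fin (2 ^ n) → ZMod 2) (hx : x = Matrix.vecMul u (kronPow n)) :
    ∀ i : Fin (2 ^ n), ∀ j ∈ Ac, (i : ℕ) ≤ (j : ℕ) →
      (∑ k ∈ Finset.univ.filter (fun k : Fin (2 ^ n) => (k : ℕ) < (i : ℕ)), u k * H k j)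
        + (∑ m : Fin (2 ^ n), x m *
            ∑ k ∈ Finset.univ.filter (fun k : Fin (2 ^ n) => (i : ℕ) ≤ (k : ℕ)),
              kronPow n m k * H k j) = 0 := by
  intro i j _ _
  have hxG : vecMul x (kronPow n) = u := hx ▸ vecMul_vecMul_kronPow_self n u
  rw [sum_mul_sum_mul_eq_of_vecMul_eq hxG]
  simp only [← not_lt]
  rw [sum_filter_add_sum_filter_not]
  simpa [vecMul, dotProduct] using congrFun hu j
end

section
/- Let n ∈ ℕ, N = 2^n, let H be an N×N upper-triangular matrix over 𝔽₂ (H_{m,j} = 0 whenever m > j), and let 𝒜ᶜ ⊆ {0,…,N−1}. Suppose u ∈ 𝔽₂^N satisfies u·H = 0. Let ℓ ∈ {0,…,N−2}, let ū ∈ 𝔽₂^{ℓ+1} be any vector with ū_j = u_j for all j ≤ ℓ, and fix t ∈ {1,…,n}. Set x_{ℓ+1}^{(t)} = u_{𝒯(ℓ+1,t)}·F^{⊗t}. Then ū·H_{0:ℓ, ℒ_{ℓ+1,t}} + x_{ℓ+1}^{(t)}·Q^{(ℓ+1,t)} = 0 over 𝔽₂, where Q^{(ℓ+1,t)} = (F^{⊗t})_{*,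 −s(ℓ+1,t)+𝒯'(ℓ+1,t)}·H_{𝒯'(ℓ+1,t), ℒ_{ℓ+1,t}}. -/
/-!
Since `F ⬝ F = 1` over `𝔽₂`, the matrix `F^{⊗t}` is an involution, so
`x_{ℓ+1}^{(t)} ⬝ F^{⊗t}` recovers `u_{𝒯(ℓ+1,t)}` and the second summand collapses to
`Σ_{k ∈ 𝒯'(ℓ+1,t)} u_k H_{k,j}`. As `H` is upper triangular and `j < s(ℓ+1,t) + 2^t`, this is
all of `Σ_{k > ℓ} u_k H_{k,j}`; adding `Σ_{k ≤ ℓ} ū_k H_{k,j} = Σ_{k ≤ ℓ} u_k H_{k,j}` gives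
`(u ⬝ H)_j = 0`.
-/

open Matrix Finset

/-- `s(i,t) = 2^t·⌊i/2^t⌋`, the first index of the length-`2^t` subgraph
containing position `i`. -/
def sIdx (i t : ℕ) : ℕ := 2 ^ t * (i / 2 ^ t)

/-- The `k`-th element of the index set `𝒯(i,t) = {s(i,t),…,s(i,t)+2^t−1}`,
as an element of `Fin (2^n)` (requires `t ≤ n`). -/
def subIdx (n t : ℕ) (ht : t ≤ n) (i : Fin (2 ^ n)) (k : Fin (2 ^ t)) : Fin (2 ^ n) :=
  ⟨sIdx (i : ℕ) t + (k : ℕ), by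
    have hk := k.isLt
    have h1 : (i : ℕ) / 2 ^ t < 2 ^ n / 2 ^ t :=
      Nat.div_lt_div_of_lt_of_dvd (pow_dvd_pow 2 ht) i.isLt
    have h2 : 2 ^ t * ((i : ℕ) / 2 ^ t + 1) ≤ 2 ^ t * (2 ^ n / 2 ^ t) :=
      Nat.mul_le_mul_left _ h1
    have h3 : 2 ^ t * (2 ^ n / 2 ^ t) = 2 ^ n :=
      Nat.mul_div_cancel' (pow_dvd_pow 2 ht)
    have h4 : 2 ^ t * ((i : ℕ) / 2 ^ t + 1) = 2 ^ t * ((i : ℕ) / 2 ^ t) + 2 ^ t := by ring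
    simp only [sIdx]
    omega⟩

lemma sIdx_le (i t : ℕ) : sIdx i t ≤ i := Nat.mul_div_le i (2 ^ t)

lemma sum_filter_subIdx {M : Type*} [AddCommMonoid M] (n t : ℕ) (ht : t ≤ n) (i : Fin (2 ^ n))
    (p : Fin (2 ^ n) → Prop) [DecidablePred p] (f : Fin (2 ^ n) → M) :
    ∑ k ∈ univ.filter (fun k => p (subIdx n t ht i k)), f (subIdx n t ht i k) =
      ∑ m ∈ univ.filter (fun m : Fin (2 ^ n) => p m ∧ sIdx i t ≤ m ∧ (m : ℕ) < sIdx i t + 2 ^ t),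
        f m := by
  have hval (k : Fin (2 ^ t)) : (subIdx n t ht i k : ℕ) = sIdx i t + k := rfl
  refine sum_nbij (subIdx n t ht i) (fun k hk => ?_) (fun a _ b _ hab => ?_) (fun m hm => ?_)
    (fun _ _ => rfl)
  · rw [mem_filter] at hk ⊢
    exact ⟨mem_univ _, hk.2, by rw [hval]; omega, by rw [hval]; omega⟩
  · exact Fin.ext (by simpa [hval] using congrArg Fin.val hab)
  · obtain ⟨-, hp, hs, hlt⟩ := mem_filter.1 (mem_coe.1 hm)
    have hm' : subIdx n t ht i ⟨m - sIdx i t, by omega⟩ = m :=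
      Fin.ext (by rw [hval]; dsimp only; omega)
    exact ⟨⟨m - sIdx i t, by omega⟩, mem_filter.2 ⟨mem_univ _, hm' ▸ hp⟩, hm'⟩

lemma sum_vecMul_apply_mul {ι κ R : Type*} [Fintype ι] [CommSemiring R] (x : ι → R)
    (A : Matrix ι κ R) (s : Finset κ) (b : κ → R) :
    ∑ k ∈ s, (x ᵥ* A) k * b k = ∑ m, x m * ∑ k ∈ s, A m k * b k := by
  simp only [vecMul, dotProduct, sum_mul, mul_sum, mul_assoc]
  exact sum_comm

theorem scc_subgraph_FC_conversion_general (n : ℕ)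
    (H : Matrix (Fin (2 ^ n)) (Fin (2 ^ n)) (ZMod 2))
    (hH : ∀ m j : Fin (2 ^ n), (j : ℕ) < (m : ℕ) → H m j = 0)
    (Ac : Finset (Fin (2 ^ n)))
    (u : Fin (2 ^ n) → ZMod 2) (hu : Matrix.vecMul u H = 0)
    (ℓ : ℕ) (hℓ : ℓ + 1 < 2 ^ n)
    (ubar : Fin (2 ^ n) → ZMod 2)
    (hubar : ∀ j : Fin (2 ^ n), (j : ℕ) ≤ ℓ → ubar j = u j)
    (t : ℕ) (htn : t ≤ n)
    (xt : Fin (2 ^ t) → ZMod 2)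
    (hxt : xt = Matrix.vecMul (fun k => u (subIdx n t htn ⟨ℓ + 1, hℓ⟩ k)) (kronPow t)) :
    ∀ j : Fin (2 ^ n), j ∈ Ac → ℓ + 1 ≤ (j : ℕ) →
      (sIdx (ℓ + 1) t ≤ (j : ℕ) ∧ (j : ℕ) < sIdx (ℓ + 1) t + 2 ^ t) →
      ¬(sIdx (ℓ + 1) (t - 1) ≤ (j : ℕ) ∧ (j : ℕ) < sIdx (ℓ + 1) (t - 1) + 2 ^ (t - 1)) →
      (∑ k ∈ Finset.univ.filter (fun k : Fin (2 ^ n) => (k : ℕ) ≤ ℓ), ubar k * H k j)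
        + (∑ m : Fin (2 ^ t), xt m *
            ∑ k ∈ Finset.univ.filter
                (fun k : Fin (2 ^ t) => ℓ + 1 ≤ (subIdx n t htn ⟨ℓ + 1, hℓ⟩ k : ℕ)),
              kronPow t m k * H (subIdx n t htn ⟨ℓ + 1, hℓ⟩ k) j) = 0 := by
  intro j _ _ hjT _
  have hx : xt ᵥ* kronPow t = fun k => u (subIdx n t htn ⟨ℓ + 1, hℓ⟩ k) := by
    rw [hxt, vecMul_vecMul, kronPow_mul_self, vecMul_one]
  have htail : ∑ k ∈ univ.filter (fun k => ℓ + 1 ≤ (subIdx n t htn ⟨ℓ + 1, hℓ⟩ k : ℕ)),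
        u (subIdx n t htn ⟨ℓ + 1, hℓ⟩ k) * H (subIdx n t htn ⟨ℓ + 1, hℓ⟩ k) j =
      ∑ k ∈ univ.filter (fun k : Fin (2 ^ n) => ¬(k : ℕ) ≤ ℓ), u k * H k j := by
    refine (sum_filter_subIdx n t htn _ (fun m => ℓ + 1 ≤ (m : ℕ)) (fun m => u m * H m j)).trans
      (sum_subset (fun k hk => ?_) (fun k hk hk' => ?_))
    · simp only [mem_filter, mem_univ, true_and] at hk ⊢
      omega
    -- the extra terms lie to the right of `𝒯(ℓ+1,t)`, below the diagonal of column `j`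
    · have := sIdx_le (ℓ + 1) t
      simp only [mem_filter, mem_univ, true_and] at hk hk'
      rw [hH k j (by omega), mul_zero]
  rw [sum_congr rfl fun k hk => by rw [hubar k (mem_filter.1 hk).2], ← sum_vecMul_apply_mul, hx,
    htail, sum_filter_add_sum_filter_not]
  exact congrFun hu j

/-- **Corollary 2 (subgraph-based FC conversion for SCC decoding).**
Let `N = 2^n`, `H` an `N × N` upper-triangular matrix over `𝔽₂`, and
`Ac ⊆ {0,…,N−1}` the constrained positions.  Suppose `u·H = 0`.
Let `ℓ ∈ {0,…,N−2}`, let `ū` (the SCC hypothesis vector of length `ℓ+1`) agree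
with `u` on all positions `j ≤ ℓ`, fix `t ∈ {1,…,n}`, and let
`x_{ℓ+1}^{(t)} = u_{𝒯(ℓ+1,t)}·F^{⊗t}`.  Then for every `j ∈ ℒ_{ℓ+1,t}`, i.e.
every `j ∈ Ac` with `j ≥ ℓ+1`, `j ∈ 𝒯(ℓ+1,t)` and `j ∉ 𝒯(ℓ+1,t−1)`:
`(ū·H_{0:ℓ,ℒ_{ℓ+1,t}})_j + (x_{ℓ+1}^{(t)}·Q^{(ℓ+1,t)})_j = 0`, where
`Q^{(ℓ+1,t)} = (F^{⊗t})_{*,−s(ℓ+1,t)+𝒯'(ℓ+1,t)}·H_{𝒯'(ℓ+1,t),ℒ_{ℓ+1,t}}`;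
entrywise the `j`-th coordinate reads `Σ_{k≤ℓ} ū_k·H_{k,j} +
Σ_{m<2^t} x_{ℓ+1}^{(t)}_m · (Σ_{k'<2^t, s(ℓ+1,t)+k' ≥ ℓ+1}
(F^{⊗t})_{m,k'}·H_{s(ℓ+1,t)+k',j}) = 0`. -/
theorem scc_subgraph_FC_conversion (n : ℕ)
    (H : Matrix (Fin (2 ^ n)) (Fin (2 ^ n)) (ZMod 2))
    (hH : ∀ m j : Fin (2 ^ n), (j : ℕ) < (m : ℕ) → H m j = 0)
    (Ac : Finset (Fin (2 ^ n)))
    (u : Fin (2 ^ n) → ZMod 2) (hu : Matrix.vecMul u H = 0)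
    (ℓ : ℕ) (hℓ : ℓ + 1 < 2 ^ n)
    (ubar : Fin (2 ^ n) → ZMod 2)
    (hubar : ∀ j : Fin (2 ^ n), (j : ℕ) ≤ ℓ → ubar j = u j)
    (t : ℕ) (ht1 : 1 ≤ t) (htn : t ≤ n)
    (xt : Fin (2 ^ t) → ZMod 2)
    (hxt : xt = Matrix.vecMul (fun k => u (subIdx n t htn ⟨ℓ + 1, hℓ⟩ k)) (kronPow t)) :
    ∀ j : Fin (2 ^ n), j ∈ Ac → ℓ + 1 ≤ (j : ℕ) →
      (sIdx (ℓ + 1) t ≤ (j : ℕ) ∧ (j : ℕ) < sIdx (ℓ + 1) t + 2 ^ t) →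
      ¬(sIdx (ℓ + 1) (t - 1) ≤ (j : ℕ) ∧ (j : ℕ) < sIdx (ℓ + 1) (t - 1) + 2 ^ (t - 1)) →
      (∑ k ∈ Finset.univ.filter (fun k : Fin (2 ^ n) => (k : ℕ) ≤ ℓ), ubar k * H k j)
        + (∑ m : Fin (2 ^ t), xt m *
            ∑ k ∈ Finset.univ.filter
                (fun k : Fin (2 ^ t) => ℓ + 1 ≤ (subIdx n t htn ⟨ℓ + 1, hℓ⟩ k : ℕ)),
              kronPow t m k * H (subIdx n t htn ⟨ℓ + 1, hℓ⟩ k) j) = 0 :=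
  scc_subgraph_FC_conversion_general n H hH Ac u hu ℓ hℓ ubar hubar t htn xt hxt
end

section
/- Let N ∈ ℕ and let 𝒜, ℱ, 𝒫 be pairwise disjoint sets with 𝒜 ∪ ℱ ∪ 𝒫 = {0,…,N−1}. Let T be an N×N matrix over 𝔽₂ such that: (a) row k of T is the zero vector for every k ∉ 𝒜; (b) for i ∈ 𝒜, column i of T is the standard basis vector e_i (T_{i,i} = 1 and T_{k,i} = 0 for k ≠ i); (c) for i ∈ ℱ, column i of T is zero; (d) for i ∈ 𝒫, T_{k,i} = 0 for all k ≥ i. Define the N×N matrix H over 𝔽₂ by: column i of H is zero for i ∈ 𝒜; column i of H is e_i for i ∈ ℱ; and for i ∈ 𝒫, H_{k,i} = T_{k,i} for k < i, H_{i,i} = 1, and H_{k,i} = 0 for k > i. Then T·H = 0; consequently every precoded word u = v·T with v ∈ 𝔽₂^N satisfies u·H = 0. -/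
open Matrix Finset

/-!
Both facts follow from two observations. The precoding matrix is idempotent: `T_{jℓ} ≠ 0`
forces `ℓ ∈ 𝒜`, and column `ℓ ∈ 𝒜` of `T` is `e_ℓ`, so `T` fixes each of its own columns.
Column by column, `H = 1 - T` (over `𝔽₂`, `-T_{k,i} = T_{k,i}` on the parity columns). Hence
`T H = T (1 - T) = T - T² = 0`, and `(v T) H = v (T H) = 0`.
-/

namespace Matrix

variable {n R : Type*} [Fintype n] [DecidableEq n]

theorem isIdempotentElem_of_cols_eq_single [Semiring R] (A : Finset n) (T : Matrix n n R)
    (hrow : ∀ k, k ∉ A → ∀ j, T k j = 0)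
    (hcol : ∀ i ∈ A, T i i = 1 ∧ ∀ k, k ≠ i → T k i = 0) :
    IsIdempotentElem T := by
  ext k i
  rw [mul_apply, Finset.sum_eq_single k]
  · by_cases hk : k ∈ A
    · rw [(hcol k hk).1, one_mul]
    · rw [hrow k hk i, mul_zero]
  · intro j _ hjk
    by_cases hj : j ∈ A
    · rw [(hcol j hj).2 k (Ne.symm hjk), zero_mul]
    · rw [hrow j hj i, mul_zero]
  · exact fun hk => absurd (Finset.mem_univ k) hk

end Matrix

theorem parityCheck_eq_one_sub {N : ℕ} {R : Type*} [Ring R] [CharP R 2]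
    (A Fr P : Finset (Fin N)) (hunion : A ∪ Fr ∪ P = Finset.univ)
    (T H : Matrix (Fin N) (Fin N) R)
    (hTA : ∀ i ∈ A, T i i = 1 ∧ ∀ k : Fin N, k ≠ i → T k i = 0)
    (hTF : ∀ i ∈ Fr, ∀ k : Fin N, T k i = 0)
    (hTP : ∀ i ∈ P, ∀ k : Fin N, (i : ℕ) ≤ (k : ℕ) → T k i = 0)
    (hHA : ∀ i ∈ A, ∀ k : Fin N, H k i = 0)
    (hHF : ∀ i ∈ Fr, H i i = 1 ∧ ∀ k : Fin N, k ≠ i → H k i = 0)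
    (hHP : ∀ i ∈ P, (∀ k : Fin N, (k : ℕ) < (i : ℕ) → H k i = T k i) ∧ H i i = 1 ∧
        ∀ k : Fin N, (i : ℕ) < (k : ℕ) → H k i = 0) :
    H = 1 - T := by
  ext k i
  rw [Matrix.sub_apply, one_apply]
  have hi : i ∈ A ∪ Fr ∪ P := hunion ▸ Finset.mem_univ i
  rcases Finset.mem_union.1 hi with hi | hiP
  · rcases Finset.mem_union.1 hi with hiA | hiF
    · obtain ⟨hTii, hTki⟩ := hTA i hiA
      by_cases hki : k = i
      · subst hki; simp [hHA k hiA, hTii]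
      · simp [hHA i hiA, hTki k hki, hki]
    · obtain ⟨hHii, hHki⟩ := hHF i hiF
      by_cases hki : k = i
      · subst hki; simp [hHii, hTF k hiF]
      · simp [hHki k hki, hTF i hiF, hki]
  · obtain ⟨hHlt, hHii, hHgt⟩ := hHP i hiP
    rcases lt_trichotomy (k : ℕ) i with hlt | heq | hgt
    · rw [if_neg (Fin.ne_of_lt hlt), zero_sub, CharTwo.neg_eq, hHlt k hlt]
    · rw [Fin.ext heq, if_pos rfl, hHii, hTP i hiP i le_rfl, sub_zero]
    · rw [if_neg (Fin.ne_of_gt hgt), hHgt k hgt, hTP i hiP k hgt.le, sub_zero]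

theorem precode_parityCheck_general (N : ℕ) (A Fr P : Finset (Fin N))
    (hunion : A ∪ Fr ∪ P = Finset.univ)
    (T H : Matrix (Fin N) (Fin N) (ZMod 2))
    (hTrow : ∀ k : Fin N, k ∉ A → ∀ j : Fin N, T k j = 0)
    (hTA : ∀ i ∈ A, T i i = 1 ∧ ∀ k : Fin N, k ≠ i → T k i = 0)
    (hTF : ∀ i ∈ Fr, ∀ k : Fin N, T k i = 0)
    (hTP : ∀ i ∈ P, ∀ k : Fin N, (i : ℕ) ≤ (k : ℕ) → T k i = 0)
    (hHA : ∀ i ∈ A, ∀ k : Fin N, H k i = 0)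
    (hHF : ∀ i ∈ Fr, H i i = 1 ∧ ∀ k : Fin N, k ≠ i → H k i = 0)
    (hHP : ∀ i ∈ P, (∀ k : Fin N, (k : ℕ) < (i : ℕ) → H k i = T k i) ∧ H i i = 1 ∧
        ∀ k : Fin N, (i : ℕ) < (k : ℕ) → H k i = 0) :
    T * H = 0 ∧
      ∀ v : Fin N → ZMod 2, Matrix.vecMul (Matrix.vecMul v T) H = 0 := by
  have hTH : T * H = 0 := by
    rw [parityCheck_eq_one_sub A Fr P hunion T H hTA hTF hTP hHA hHF hHP]
    exact (isIdempotentElem_of_cols_eq_single A T hTrow hTA).mul_one_sub_self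
  refine ⟨hTH, fun v => ?_⟩
  rw [vecMul_vecMul, hTH, vecMul_zero]

/-- **Parity-check matrix on the encoder input (`T·H = 0`).**
Let `𝒜, ℱ, 𝒫` be pairwise disjoint sets partitioning `{0,…,N−1}` (information,
frozen and parity positions).  Let `T` be the `N × N` precoding matrix over `𝔽₂`:
(a) row `k` of `T` is zero for `k ∉ 𝒜`; (b) for `i ∈ 𝒜`, column `i` of `T` is the
standard basis vector `e_i`; (c) for `i ∈ ℱ`, column `i` of `T` is zero;
(d) for `i ∈ 𝒫`, `T_{k,i} = 0` for all `k ≥ i` (causal parity generation).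
Define the parity-check matrix `H` by: column `i` of `H` is zero for `i ∈ 𝒜`,
equals `e_i` for `i ∈ ℱ`, and for `i ∈ 𝒫` satisfies `H_{k,i} = T_{k,i}` for
`k < i`, `H_{i,i} = 1`, `H_{k,i} = 0` for `k > i`.
Then `T·H = 0`; consequently every precoded word `u = v·T` satisfies `u·H = 0`. -/
theorem precode_parityCheck (N : ℕ) (A Fr P : Finset (Fin N))
    (hAF : Disjoint A Fr) (hAP : Disjoint A P) (hFP : Disjoint Fr P)
    (hunion : A ∪ Fr ∪ P = Finset.univ)
    (T H : Matrix (Fin N) (Fin N) (ZMod 2))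
    (hTrow : ∀ k : Fin N, k ∉ A → ∀ j : Fin N, T k j = 0)
    (hTA : ∀ i ∈ A, T i i = 1 ∧ ∀ k : Fin N, k ≠ i → T k i = 0)
    (hTF : ∀ i ∈ Fr, ∀ k : Fin N, T k i = 0)
    (hTP : ∀ i ∈ P, ∀ k : Fin N, (i : ℕ) ≤ (k : ℕ) → T k i = 0)
    (hHA : ∀ i ∈ A, ∀ k : Fin N, H k i = 0)
    (hHF : ∀ i ∈ Fr, H i i = 1 ∧ ∀ k : Fin N, k ≠ i → H k i = 0)
    (hHP : ∀ i ∈ P, (∀ k : Fin N, (k : ℕ) < (i : ℕ) → H k i = T k i) ∧ H i i = 1 ∧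
        ∀ k : Fin N, (i : ℕ) < (k : ℕ) → H k i = 0) :
    T * H = 0 ∧
      ∀ v : Fin N → ZMod 2, Matrix.vecMul (Matrix.vecMul v T) H = 0 :=
  precode_parityCheck_general N A Fr P hunion T H hTrow hTA hTF hTP hHA hHF hHP
end
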